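/- arXiv:math/9807157 — 2 statements merged into one kernel-verified Lean document; each statement's English description precedes it below -/
import Mathlib

section
/- Let h be a complex number with exp(h) ≠ 1 and set [x] = (exp(hx/2) − exp(−hx/2))/(exp(h/2) − exp(−h/2)) for x ∈ ℂ. For all complex numbers a, b, c, d, e such that [d−e−1], [d−e+1], [c−a−1], [c−a+1] are all nonzero, one has ([a−b−1][c−b−1] − [2][a−b][c−b−1] + [a−b][c−b]) · ( [a−d][c−e−1]/([d−e−1][c−a−1]) + [c−d−1][a−e]/([d−e+1][c−a−1]) ) + ( [a−e−1][c−d]/([d−e−1][c−a+1]) + [a−d−1][c−e]/([d−e+1][c−a+1]) ) · ([a−b−1][c−b−1] − [2][a−b−1][c−b] + [a−b][c−b]) = 0. (Identity (25) of the paper.) -/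
/-!
Since `[x] = sinh (h x / 2) / sinh (h / 2)`, the bracket satisfies `[x + y][x - y] = [x]² - [y]²`,
i.e. `[x][y] - [z][w] = [x - w][z - x]` whenever `x + y = z + w`. Together with
`[2][x] = [x + 1] + [x - 1]` this collapses the two factors depending on `b` to
`-[1][c - a - 1]` and `[1][c - a + 1]`, which cancel the denominators in `c - a`. What remains is
`[1] (([a-e-1][c-d] - [a-d][c-e-1]) / [d-e-1] + ([a-d-1][c-e] - [c-d-1][a-e]) / [d-e+1])`,
and the same identity turns the two quotients into `-[a - c]` and `[a - c]`.
-/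

/-- The q-bracket `[x] = (exp(hx/2) - exp(-hx/2))/(exp(h/2) - exp(-h/2))`. -/
noncomputable def qbr (h x : ℂ) : ℂ :=
  (Complex.exp (h * x / 2) - Complex.exp (-(h * x) / 2)) /
    (Complex.exp (h / 2) - Complex.exp (-h / 2))

open Complex

lemma qbr_eq_sinh_div (h x : ℂ) : qbr h x = sinh (h * x / 2) / sinh (h / 2) := by
  rw [qbr, sinh, sinh, neg_div, neg_div, div_div_div_cancel_right₀ two_ne_zero]

lemma qbr_neg (h x : ℂ) : qbr h (-x) = -qbr h x := by
  rw [qbr_eq_sinh_div, qbr_eq_sinh_div, mul_neg, neg_div, sinh_neg, neg_div]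

lemma sinh_add_mul_sinh_sub (x y : ℂ) :
    sinh (x + y) * sinh (x - y) = sinh x ^ 2 - sinh y ^ 2 := by
  rw [sinh_add, sinh_sub]
  linear_combination sinh x ^ 2 * cosh_sq y - sinh y ^ 2 * cosh_sq x

lemma qbr_add_mul_qbr_sub (h x y : ℂ) :
    qbr h (x + y) * qbr h (x - y) = qbr h x ^ 2 - qbr h y ^ 2 := by
  simp only [qbr_eq_sinh_div, div_pow, div_mul_div_comm, ← sq, mul_add, mul_sub,
    add_div, sub_div, sinh_add_mul_sinh_sub]

lemma qbr_mul_sub_qbr_mul (h : ℂ) {x y z w u v : ℂ} (hsum : x + y = z + w) (hu : x - w = u)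
    (hv : z - x = v) : qbr h x * qbr h y - qbr h z * qbr h w = qbr h u * qbr h v := by
  have mul_eq (s t : ℂ) :
      qbr h s * qbr h t = qbr h ((s + t) / 2) ^ 2 - qbr h ((s - t) / 2) ^ 2 := by
    rw [← qbr_add_mul_qbr_sub]
    ring_nf
  have hxw : (x - w + (z - x)) / 2 = (z - w) / 2 := by ring
  have hxy : (x - w - (z - x)) / 2 = (x - y) / 2 := by linear_combination hsum / 2
  rw [mul_eq, mul_eq, mul_eq, ← hu, ← hv, hsum, hxw, hxy]
  ring

lemma qbr_two_mul (h x : ℂ) : qbr h 2 * qbr h x = qbr h (x + 1) + qbr h (x - 1) := by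
  -- if `sinh (h / 2) = 0`, every bracket is `0` by the convention `x / 0 = 0`
  rcases eq_or_ne (sinh (h / 2)) 0 with hs | hs
  · simp [qbr_eq_sinh_div, hs]
  simp only [qbr_eq_sinh_div]
  rw [show h * 2 / 2 = 2 * (h / 2) by ring, show h * (x + 1) / 2 = h * x / 2 + h / 2 by ring,
    show h * (x - 1) / 2 = h * x / 2 - h / 2 by ring, sinh_two_mul, sinh_add, sinh_sub]
  field_simp
  ring

lemma qbr_mul_sub_qbr_two_mul_add_fst (h x y : ℂ) :
    qbr h (x - 1) * qbr h (y - 1) - qbr h 2 * qbr h x * qbr h (y - 1) + qbr h x * qbr h y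
      = -(qbr h 1 * qbr h (y - x - 1)) := by
  have key : qbr h x * qbr h y - qbr h (y - 1) * qbr h (x + 1) = qbr h (-1) * qbr h (y - x - 1) :=
    qbr_mul_sub_qbr_mul h (by ring) (by ring) (by ring)
  rw [qbr_neg] at key
  linear_combination key - qbr h (y - 1) * qbr_two_mul h x

lemma qbr_mul_sub_qbr_two_mul_add_snd (h x y : ℂ) :
    qbr h (x - 1) * qbr h (y - 1) - qbr h 2 * qbr h (x - 1) * qbr h y + qbr h x * qbr h y
      = qbr h 1 * qbr h (y - x + 1) := by
  have key : qbr h x * qbr h y - qbr h (y + 1) * qbr h (x - 1) = qbr h 1 * qbr h (y - x + 1) :=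
    qbr_mul_sub_qbr_mul h (by ring) (by ring) (by ring)
  linear_combination key - qbr h (x - 1) * qbr_two_mul h y

theorem identity_25_general (h : ℂ) (a b c d e : ℂ)
    (h1 : qbr h (d - e - 1) ≠ 0) (h2 : qbr h (d - e + 1) ≠ 0)
    (h3 : qbr h (c - a - 1) ≠ 0) (h4 : qbr h (c - a + 1) ≠ 0) :
    (qbr h (a - b - 1) * qbr h (c - b - 1)
        - qbr h 2 * qbr h (a - b) * qbr h (c - b - 1)
        + qbr h (a - b) * qbr h (c - b)) *
      (qbr h (a - d) * qbr h (c - e - 1) / (qbr h (d - e - 1) * qbr h (c - a - 1))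
        + qbr h (c - d - 1) * qbr h (a - e) / (qbr h (d - e + 1) * qbr h (c - a - 1)))
    + (qbr h (a - e - 1) * qbr h (c - d) / (qbr h (d - e - 1) * qbr h (c - a + 1))
        + qbr h (a - d - 1) * qbr h (c - e) / (qbr h (d - e + 1) * qbr h (c - a + 1))) *
      (qbr h (a - b - 1) * qbr h (c - b - 1)
        - qbr h 2 * qbr h (a - b - 1) * qbr h (c - b)
        + qbr h (a - b) * qbr h (c - b)) = 0 := by
  have cross_minus : qbr h (a - e - 1) * qbr h (c - d) - qbr h (a - d) * qbr h (c - e - 1)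
      = qbr h (a - c) * qbr h (-(d - e - 1)) := qbr_mul_sub_qbr_mul h (by ring) (by ring) (by ring)
  have cross_plus : qbr h (a - d - 1) * qbr h (c - e) - qbr h (c - d - 1) * qbr h (a - e)
      = qbr h (-(d - e + 1)) * qbr h (-(a - c)) :=
    qbr_mul_sub_qbr_mul h (by ring) (by ring) (by ring)
  rw [qbr_neg] at cross_minus
  rw [qbr_neg, qbr_neg] at cross_plus
  rw [qbr_mul_sub_qbr_two_mul_add_fst, qbr_mul_sub_qbr_two_mul_add_snd, sub_sub_sub_cancel_right]
  field_simp
  linear_combination qbr h 1 * (qbr h (d - e + 1) * cross_minus + qbr h (d - e - 1) * cross_plus)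

/-- Identity (25). -/
theorem identity_25 (h : ℂ) (hh : Complex.exp h ≠ 1) (a b c d e : ℂ)
    (h1 : qbr h (d - e - 1) ≠ 0) (h2 : qbr h (d - e + 1) ≠ 0)
    (h3 : qbr h (c - a - 1) ≠ 0) (h4 : qbr h (c - a + 1) ≠ 0) :
    (qbr h (a - b - 1) * qbr h (c - b - 1)
        - qbr h 2 * qbr h (a - b) * qbr h (c - b - 1)
        + qbr h (a - b) * qbr h (c - b)) *
      (qbr h (a - d) * qbr h (c - e - 1) / (qbr h (d - e - 1) * qbr h (c - a - 1))
        + qbr h (c - d - 1) * qbr h (a - e) / (qbr h (d - e + 1) * qbr h (c - a - 1)))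
    + (qbr h (a - e - 1) * qbr h (c - d) / (qbr h (d - e - 1) * qbr h (c - a + 1))
        + qbr h (a - d - 1) * qbr h (c - e) / (qbr h (d - e + 1) * qbr h (c - a + 1))) *
      (qbr h (a - b - 1) * qbr h (c - b - 1)
        - qbr h 2 * qbr h (a - b - 1) * qbr h (c - b)
        + qbr h (a - b) * qbr h (c - b)) = 0 :=
  identity_25_general h a b c d e h1 h2 h3 h4
end

section
/- Let q be a nonzero complex number, let n ≥ 2 be an integer, and let A₁, …, A_{n−1} be pairwise distinct nonzero complex numbers, B₁, …, B_n pairwise distinct nonzero complex numbers such that A_j ≠ q⁻⁴B_i for all j ∈ {1, …, n−1} and i ∈ {1, …, n}, and let C₁, …, C_{n+1}, D₁, …, D_{n−2} be arbitrary complex numbers. Then ∑_{j=1}^{n−1} ( ∏_{i=1}^{n−2} (A_j − q⁻²D_i) · ∏_{i=1}^{n+1} (A_j − q⁻²C_i) ) / ( A_j · ∏_{i≠j, i=1}^{n−1} (A_j − A_i) · ∏_{i=1}^{n} (A_j − q⁻⁴B_i) ) + ∑_{l=1}^{n} ( ∏_{i=1}^{n+1} (B_l − q²C_i) · ∏_{i=1}^{n−2}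 (B_l − q²D_i) ) / ( B_l · ∏_{i≠l, i=1}^{n} (B_l − B_i) · ∏_{i=1}^{n−1} (B_l − q⁴A_i) ) + q² · ( ∏_{i=1}^{n−2} D_i · ∏_{i=1}^{n+1} C_i ) / ( ∏_{i=1}^{n−1} A_i · ∏_{i=1}^{n} B_i ) − 1 = 0. (Identity (A19), obtained by applying the residue theorem to the rational function f(z) = ∏_{i=1}^{n−2}(z − q⁻²D_i)·∏_{i=1}^{n+1}(z − q⁻²C_i) / ( z·∏_{i=1}^{n−1}(z − A_i)·∏_{i=1}^{n}(z − q⁻⁴B_i) ).) -/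
/-!
The three terms are the residues of `f` at its simple poles `A_j`, `q⁻⁴ B_l` and `0`; at
`q⁻⁴ B_l` and `0` this is seen after pulling `q⁻⁴` out of every factor. The numerator of `f` is
monic of degree one less than its denominator, so by Lagrange interpolation at the poles the
residues add up to its leading coefficient `1`.
-/

open Polynomial Finset

namespace Finset

variable {α β : Type*} [DecidableEq α] [DecidableEq β]

theorem erase_some_insertNone (s : Finset α) (a : α) :
    (insertNone s).erase (some a) = insertNone (s.erase a) := by
  ext (_ | x) <;> simp

theorem erase_none_insertNone (s : Finset α) :
    (insertNone s).erase none = s.map Function.Embedding.some := by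
  ext (_ | x) <;> simp

theorem erase_inl_disjSum (s : Finset α) (t : Finset β) (a : α) :
    (s.disjSum t).erase (.inl a) = (s.erase a).disjSum t := by
  ext (x | y) <;> simp

theorem erase_inr_disjSum (s : Finset α) (t : Finset β) (b : β) :
    (s.disjSum t).erase (.inr b) = s.disjSum (t.erase b) := by
  ext (x | y) <;> simp

end Finset

theorem injOn_optionElim_sumElim {M α β : Type*} [Zero M] {s : Finset α} {t : Finset β}
    {a : α → M} {b : β → M} (ha : Set.InjOn a s) (hb : Set.InjOn b t)
    (ha0 : ∀ i ∈ s, a i ≠ 0) (hb0 : ∀ l ∈ t, b l ≠ 0) (hab : ∀ i ∈ s, ∀ l ∈ t, a i ≠ b l) :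
    Set.InjOn (fun o : Option (α ⊕ β) => o.elim 0 (Sum.elim a b)) (insertNone (s.disjSum t)) := by
  rintro (_ | i | l) hx (_ | j | m) hy h <;> simp_all [eq_comm, ha.eq_iff, hb.eq_iff]

section

variable {F : Type*} [Field F]

theorem Lagrange.leadingCoeff_eq_sum_add_sum_add_eval_zero {α β : Type*} [DecidableEq α]
    [DecidableEq β] {s : Finset α} {t : Finset β} {a : α → F} {b : β → F}
    (ha : Set.InjOn a s) (hb : Set.InjOn b t) (ha0 : ∀ i ∈ s, a i ≠ 0)
    (hb0 : ∀ l ∈ t, b l ≠ 0) (hab : ∀ i ∈ s, ∀ l ∈ t, a i ≠ b l) {P : F[X]}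
    (hP : P.degree = #s + #t) :
    P.leadingCoeff =
      ∑ i ∈ s, P.eval (a i) / (a i * (∏ k ∈ s.erase i, (a i - a k)) * ∏ l ∈ t, (a i - b l)) +
      ∑ l ∈ t, P.eval (b l) / (b l * (∏ k ∈ t.erase l, (b l - b k)) * ∏ i ∈ s, (b l - a i)) +
      P.eval 0 / ((∏ i ∈ s, -a i) * ∏ l ∈ t, -b l) := by
  rw [Lagrange.leadingCoeff_eq_sum (injOn_optionElim_sumElim ha hb ha0 hb0 hab)]
  · simp only [sum_insertNone, Option.elim_none, erase_none_insertNone, zero_sub, prod_map,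
      Function.Embedding.some_apply, Option.elim_some, prod_disjSum, Sum.elim_inl, Sum.elim_inr,
      erase_some_insertNone, prod_insertNone, sub_zero, sum_disjSum, erase_inl_disjSum,
      erase_inr_disjSum]
    simp only [mul_assoc, mul_comm (∏ i ∈ s, _ : F)]
    ring
  · simp [hP]

theorem prod_mul_sub_eq_pow_card_mul_prod {ι : Type*} {c : F} (hc : c ≠ 0) (x : F)
    (s : Finset ι) (d : ι → F) :
    ∏ i ∈ s, (c * x - d i) = c ^ #s * ∏ i ∈ s, (x - c⁻¹ * d i) := by
  rw [← prod_const, ← prod_mul_distrib]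
  refine prod_congr rfl fun i _ => ?_
  rw [mul_sub, mul_inv_cancel_left₀ hc]

theorem identity_A19_B_term {q : F} (hq : q ≠ 0) {n : ℕ} (hn : 2 ≤ n) (A B C D : ℕ → F) {l : ℕ}
    (hl : l ∈ Icc 1 n) :
    (∏ i ∈ Icc 1 (n - 2), ((q ^ 4)⁻¹ * B l - (q ^ 2)⁻¹ * D i)) *
        (∏ i ∈ Icc 1 (n + 1), ((q ^ 4)⁻¹ * B l - (q ^ 2)⁻¹ * C i)) /
      ((q ^ 4)⁻¹ * B l * (∏ k ∈ (Icc 1 n).erase l, ((q ^ 4)⁻¹ * B l - (q ^ 4)⁻¹ * B k)) *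
        ∏ i ∈ Icc 1 (n - 1), ((q ^ 4)⁻¹ * B l - A i)) =
    ((∏ i ∈ Icc 1 (n + 1), (B l - q ^ 2 * C i)) * ∏ i ∈ Icc 1 (n - 2), (B l - q ^ 2 * D i)) /
      (B l * (∏ i ∈ (Icc 1 n).erase l, (B l - B i)) * ∏ i ∈ Icc 1 (n - 1), (B l - q ^ 4 * A i)) := by
  obtain ⟨m, rfl⟩ := Nat.exists_eq_add_of_le' hn
  have hc : (q ^ 4)⁻¹ ≠ 0 := by positivity
  have hq42 : q ^ 4 * (q ^ 2)⁻¹ = q ^ 2 := by field_simp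
  simp only [prod_mul_sub_eq_pow_card_mul_prod hc, inv_inv, ← mul_assoc, hq42,
    mul_inv_cancel₀ (pow_ne_zero 4 hq), one_mul, card_erase_of_mem hl, Nat.card_Icc,
    add_tsub_cancel_right, Nat.add_one_sub_one]
  conv_rhs => rw [← mul_div_mul_left _ _ (pow_ne_zero (2 * m + 3) hc)]
  congr 1 <;> ring

theorem identity_A19_zero_term {q : F} (hq : q ≠ 0) {n : ℕ} (hn : 2 ≤ n) (A B C D : ℕ → F) :
    (∏ i ∈ Icc 1 (n - 2), -((q ^ 2)⁻¹ * D i)) * (∏ i ∈ Icc 1 (n + 1), -((q ^ 2)⁻¹ * C i)) /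
      ((∏ i ∈ Icc 1 (n - 1), -A i) * ∏ l ∈ Icc 1 n, -((q ^ 4)⁻¹ * B l)) =
    q ^ 2 * ((∏ i ∈ Icc 1 (n - 2), D i) * ∏ i ∈ Icc 1 (n + 1), C i) /
      ((∏ i ∈ Icc 1 (n - 1), A i) * ∏ i ∈ Icc 1 n, B i) := by
  obtain ⟨m, rfl⟩ := Nat.exists_eq_add_of_le' hn
  simp only [← neg_mul, neg_eq_neg_one_mul (A _), ← pow_card_mul_prod, Nat.card_Icc,
    add_tsub_cancel_right, Nat.add_one_sub_one]
  have hk : (-1) ^ (m + 1) * (-(q ^ 4)⁻¹) ^ (m + 2) ≠ 0 := by simp [hq]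
  conv_rhs => rw [← mul_div_mul_left _ _ hk]
  congr 1
  · simp only [neg_pow (q ^ 4)⁻¹, neg_pow (q ^ 2)⁻¹, inv_pow, ← pow_mul]
    field_simp
    ring
  · ring

end

/-- Identity (A19). -/
theorem identity_A19 (q : ℂ) (hq : q ≠ 0) (n : ℕ) (hn : 2 ≤ n)
    (A B C D : ℕ → ℂ)
    (hA0 : ∀ j ∈ Finset.Icc 1 (n - 1), A j ≠ 0)
    (hAA : ∀ j ∈ Finset.Icc 1 (n - 1), ∀ i ∈ Finset.Icc 1 (n - 1), j ≠ i → A j ≠ A i)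
    (hB0 : ∀ i ∈ Finset.Icc 1 n, B i ≠ 0)
    (hBB : ∀ l ∈ Finset.Icc 1 n, ∀ i ∈ Finset.Icc 1 n, l ≠ i → B l ≠ B i)
    (hAB : ∀ j ∈ Finset.Icc 1 (n - 1), ∀ i ∈ Finset.Icc 1 n, A j ≠ (q ^ 4)⁻¹ * B i) :
    (∑ j ∈ Finset.Icc 1 (n - 1),
      ((∏ i ∈ Finset.Icc 1 (n - 2), (A j - (q ^ 2)⁻¹ * D i)) *
          ∏ i ∈ Finset.Icc 1 (n + 1), (A j - (q ^ 2)⁻¹ * C i)) /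
        (A j * (∏ i ∈ (Finset.Icc 1 (n - 1)).erase j, (A j - A i)) *
          ∏ i ∈ Finset.Icc 1 n, (A j - (q ^ 4)⁻¹ * B i)))
    + (∑ l ∈ Finset.Icc 1 n,
      ((∏ i ∈ Finset.Icc 1 (n + 1), (B l - q ^ 2 * C i)) *
          ∏ i ∈ Finset.Icc 1 (n - 2), (B l - q ^ 2 * D i)) /
        (B l * (∏ i ∈ (Finset.Icc 1 n).erase l, (B l - B i)) *
          ∏ i ∈ Finset.Icc 1 (n - 1), (B l - q ^ 4 * A i)))
    + q ^ 2 * ((∏ i ∈ Finset.Icc 1 (n - 2), D i) * ∏ i ∈ Finset.Icc 1 (n + 1), C i) /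
        ((∏ i ∈ Finset.Icc 1 (n - 1), A i) * ∏ i ∈ Finset.Icc 1 n, B i)
    - 1 = 0 := by
  have hc : (q ^ 4)⁻¹ ≠ 0 := by positivity
  have hA : Set.InjOn A (Icc 1 (n - 1)) := fun j hj i hi h =>
    by_contra fun hji => hAA j hj i hi hji h
  have hB : Set.InjOn (fun l => (q ^ 4)⁻¹ * B l) (Icc 1 n) := fun l hl i hi h =>
    by_contra fun hli => hBB l hl i hi hli (mul_left_cancel₀ hc h)
  set P := Lagrange.nodal (Icc 1 (n - 2)) (fun i => (q ^ 2)⁻¹ * D i) *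
    Lagrange.nodal (Icc 1 (n + 1)) (fun i => (q ^ 2)⁻¹ * C i)
  have hPdeg : P.degree = #(Icc 1 (n - 1)) + #(Icc 1 n) := by
    simp only [P, degree_mul, Lagrange.degree_nodal, Nat.card_Icc]
    norm_cast
    omega
  have key := Lagrange.leadingCoeff_eq_sum_add_sum_add_eval_zero hA hB hA0
    (fun l hl => mul_ne_zero hc (hB0 l hl)) hAB hPdeg
  simp only [P, Lagrange.nodal_monic.mul Lagrange.nodal_monic, Monic.leadingCoeff, eval_mul,
    Lagrange.eval_nodal, zero_sub] at key
  rw [sum_congr rfl fun l hl => identity_A19_B_term hq hn A B C D hl,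
    identity_A19_zero_term hq hn A B C D] at key
  exact sub_eq_zero.mpr key.symm
end
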